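/- Let α > −1 be real, N ≥ 1, and let x_1, …, x_N be pairwise distinct positive reals. Then, as y = (y_1,…,y_N) tends to (0,…,0) through tuples of pairwise distinct positive reals, the ratio det_{1≤i,j≤N}[ I_α(x_i · y_j) ] / ( (∏_{k=1}^N (x_k y_k)^α) · Δ(y²) ) converges to Δ(x²) · 2^{−αN − N(N−1)} / ∏_{j=1}^N ( (j−1)! · Γ(α+j) ). -/

import Mathlib

open Filter

/-- The modified Bessel function of the first kind, for `x > 0`,
`I_α(x) = Σ_{k=0}^∞ (x/2)^{2k+α} / (k! Γ(k+α+1))`. -/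
noncomputable def besselI (α x : ℝ) : ℝ :=
  ∑' k : ℕ, (x / 2) ^ (2 * (k : ℝ) + α) / ((Nat.factorial k : ℝ) * Real.Gamma ((k : ℝ) + α + 1))

/-- The Vandermonde product `Δ(x) = ∏_{1 ≤ j < k ≤ N} (x_k - x_j)`. -/
def vandermondeProd {N : ℕ} (x : Fin N → ℝ) : ℝ :=
  ∏ p ∈ Finset.univ.filter (fun p : Fin N × Fin N => p.1 < p.2), (x p.2 - x p.1)

/-!
Write `I_α(u) = (u/2)^α f(u²)` with `f(t) = ∑ c_k t^k` entire. Pulling `(x_i/2)^α` out of the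
rows and `y_j^α` out of the columns leaves `det [f(x_i² y_j²)]`. Expanding every power `t^k` in
the Newton basis `∏_{l<j} (t - y_l²)` at the nodes `y_0², y_1², …` factors this determinant as
`det C(y) · Δ(y²)`, with `C(y)_{ij} = ∑_k c_k x_i^{2k} h_{k-j}(y_0², …, y_j²)`. As `y → 0` the
complete homogeneous polynomials `h_{k-j}` tend to `δ_{kj}`, so by dominated convergence `C(y)`
tends to `[c_j x_i^{2j}]`, whose determinant is `∏ c_j · Δ(x²)`.
-/

open Topology

/-- The coefficient of `∏_{l<j} (t - b l)` in the Newton expansion of `t ^ k`, that is,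
`h_{k-j}(b 0, …, b j)` for `j ≤ k` and `0` for `j > k`. -/
def newtonCoeff (b : ℕ → ℝ) : ℕ → ℕ → ℝ
  | 0, j => if j = 0 then 1 else 0
  | k + 1, 0 => b 0 * newtonCoeff b k 0
  | k + 1, j + 1 => newtonCoeff b k j + b (j + 1) * newtonCoeff b k (j + 1)

section NewtonCoeff

variable (b : ℕ → ℝ)

theorem newtonCoeff_eq_zero_of_lt : ∀ {k j : ℕ}, k < j → newtonCoeff b k j = 0
  | 0, j + 1, _ => rfl
  | k + 1, j + 1, h => by
    rw [newtonCoeff, newtonCoeff_eq_zero_of_lt (by omega), newtonCoeff_eq_zero_of_lt (by omega)]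
    ring

theorem pow_eq_sum_newtonCoeff (t : ℝ) {k n : ℕ} (hkn : k < n) :
    t ^ k = ∑ j ∈ Finset.range n, newtonCoeff b k j * ∏ l ∈ Finset.range j, (t - b l) := by
  induction k generalizing n with
  | zero =>
    obtain ⟨n, rfl⟩ := Nat.exists_eq_add_one_of_ne_zero hkn.ne'
    simp [newtonCoeff]
  | succ k ih =>
    set P : ℕ → ℝ := fun j => ∏ l ∈ Finset.range j, (t - b l)
    obtain ⟨n, rfl⟩ := Nat.exists_eq_add_one_of_ne_zero (by omega : n ≠ 0)
    have hlast : newtonCoeff b k n = 0 := newtonCoeff_eq_zero_of_lt b (by omega)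
    calc t ^ (k + 1) = ∑ j ∈ Finset.range (n + 1), newtonCoeff b k j * P j * t := by
          rw [pow_succ, ih (n := n + 1) (by omega), Finset.sum_mul]
      _ = ∑ j ∈ Finset.range (n + 1), newtonCoeff b k j * P (j + 1)
            + ∑ j ∈ Finset.range (n + 1), b j * newtonCoeff b k j * P j := by
          rw [← Finset.sum_add_distrib]
          refine Finset.sum_congr rfl fun j _ => ?_
          simp only [P, Finset.prod_range_succ]
          ring
      _ = ∑ j ∈ Finset.range (n + 1), newtonCoeff b (k + 1) j * P j := by
          rw [Finset.sum_range_succ _ n, hlast, Finset.sum_range_succ' _ n,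
            Finset.sum_range_succ' _ n]
          simp only [newtonCoeff, add_mul, Finset.sum_add_distrib]
          ring

theorem pow_node_eq_sum_newtonCoeff (k : ℕ) {m n : ℕ} (hmn : m < n) :
    b m ^ k = ∑ j ∈ Finset.range n, newtonCoeff b k j * ∏ l ∈ Finset.range j, (b m - b l) := by
  have hvanish : ∀ j ∈ Finset.range (max n (k + 1)), j ∉ Finset.range n →
      newtonCoeff b k j * ∏ l ∈ Finset.range j, (b m - b l) = 0 := fun j _ hj => by
    rw [Finset.prod_eq_zero (Finset.mem_range.2 (hmn.trans_le (by simpa using hj))) (sub_self _),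
      mul_zero]
  rw [pow_eq_sum_newtonCoeff b _ (lt_max_of_lt_right k.lt_succ_self),
    Finset.sum_subset (Finset.range_subset_range.2 (le_max_left _ _)) hvanish]

theorem continuous_newtonCoeff : ∀ k j : ℕ, Continuous fun b => newtonCoeff b k j
  | 0, _ => continuous_const
  | k + 1, 0 => (continuous_apply 0).mul (continuous_newtonCoeff k 0)
  | k + 1, j + 1 =>
    (continuous_newtonCoeff k j).add ((continuous_apply _).mul (continuous_newtonCoeff k (j + 1)))

theorem newtonCoeff_zero : ∀ k j : ℕ, newtonCoeff 0 k j = if k = j then 1 else 0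
  | 0, j => by simp [newtonCoeff, eq_comm]
  | k + 1, 0 => by simp [newtonCoeff]
  | k + 1, j + 1 => by simp [newtonCoeff, newtonCoeff_zero k j]

theorem abs_newtonCoeff_le {r : ℝ} : ∀ {k j : ℕ}, (∀ l ≤ j, |b l| ≤ r) →
    |newtonCoeff b k j| ≤ (1 + r) ^ k
  | 0, j, _ => by unfold newtonCoeff; split_ifs <;> simp
  | k + 1, 0, hb => by
    have hr : 0 ≤ r := (abs_nonneg _).trans (hb 0 le_rfl)
    rw [newtonCoeff, abs_mul, pow_succ']
    exact mul_le_mul (by linarith [hb 0 le_rfl]) (abs_newtonCoeff_le hb) (abs_nonneg _)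
      (by positivity)
  | k + 1, j + 1, hb => by
    have hr : 0 ≤ r := (abs_nonneg _).trans (hb 0 (Nat.zero_le _))
    have h1 := abs_newtonCoeff_le (k := k) (j := j) fun l hl => hb l (by omega)
    have h2 := abs_newtonCoeff_le (k := k) hb
    rw [newtonCoeff]
    calc _ ≤ |newtonCoeff b k j| + |b (j + 1)| * |newtonCoeff b k (j + 1)| :=
          (abs_add_le _ _).trans_eq (by rw [abs_mul])
      _ ≤ (1 + r) ^ k + r * (1 + r) ^ k :=
          add_le_add h1 (mul_le_mul (hb _ le_rfl) h2 (abs_nonneg _) hr)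
      _ = (1 + r) ^ (k + 1) := by ring

end NewtonCoeff

theorem vandermondeProd_eq_det {N : ℕ} (v : Fin N → ℝ) :
    vandermondeProd v = (Matrix.vandermonde v).det := by
  rw [Matrix.det_vandermonde, vandermondeProd, Finset.prod_filter, Fintype.prod_prod_type]
  refine Finset.prod_congr rfl fun i _ => ?_
  rw [← Finset.prod_filter, Finset.filter_lt_eq_Ioi]

theorem vandermondeProd_ne_zero {N : ℕ} {v : Fin N → ℝ} (hv : Function.Injective v) :
    vandermondeProd v ≠ 0 := by
  rw [vandermondeProd_eq_det]
  exact Matrix.det_vandermonde_ne_zero_iff.2 hv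

theorem det_newtonBasis {N : ℕ} (b : ℕ → ℝ) :
    (Matrix.of fun m j : Fin N => ∏ l ∈ Finset.range j, (b m - b l)).det
      = vandermondeProd (fun m : Fin N => b m) := by
  open Polynomial in
  rw [vandermondeProd_eq_det, Matrix.det_eval_matrixOfPolynomials_eq_det_vandermonde _
    (fun j => ∏ l ∈ Finset.range j, (X - C (b l)))]
  · simp [eval_prod]
  · intro j
    rw [natDegree_prod_of_monic _ _ fun l _ => monic_X_sub_C _]
    simp
  · exact fun j => monic_prod_of_monic _ _ fun l _ => monic_X_sub_C _

theorem det_of_mul_pow {N : ℕ} (c : ℕ → ℝ) (a : Fin N → ℝ) :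
    (Matrix.of fun i j : Fin N => c j * a i ^ (j : ℕ)).det
      = (∏ j : Fin N, c j) * vandermondeProd a := by
  rw [vandermondeProd_eq_det]
  exact Matrix.det_mul_row (fun j : Fin N => c j) (Matrix.vandermonde a)

noncomputable def newtonMatrix {N : ℕ} (c : ℕ → ℝ) (a : Fin N → ℝ) (b : ℕ → ℝ) :
    Matrix (Fin N) (Fin N) ℝ :=
  Matrix.of fun i j => ∑' k, c k * a i ^ k * newtonCoeff b k j

section NewtonMatrix

variable {N : ℕ} {c : ℕ → ℝ} (a : Fin N → ℝ)

theorem abs_mul_pow_mul_newtonCoeff_le (t : ℝ) (b : ℕ → ℝ) (k j : ℕ) {r : ℝ}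
    (hb : ∀ l ≤ j, |b l| ≤ r) :
    |c k * t ^ k * newtonCoeff b k j| ≤ |c k * (|t| * (1 + r)) ^ k| := by
  have hr : 0 ≤ 1 + r := by linarith [(abs_nonneg _).trans (hb 0 (Nat.zero_le _))]
  rw [abs_mul, abs_mul, abs_mul, abs_pow, abs_pow, abs_mul, abs_abs, abs_of_nonneg hr, mul_pow,
    mul_assoc]
  gcongr
  exact abs_newtonCoeff_le b hb

theorem summable_mul_pow_mul_newtonCoeff (hc : ∀ M : ℝ, Summable fun k => c k * M ^ k)
    (t : ℝ) (b : ℕ → ℝ) (j : ℕ) : Summable fun k => c k * t ^ k * newtonCoeff b k j := by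
  have hb : ∀ l ≤ j, |b l| ≤ ∑ l ∈ Finset.range (j + 1), |b l| := fun l hl =>
    Finset.single_le_sum (f := fun l => |b l|) (fun _ _ => abs_nonneg _)
      (Finset.mem_range.2 (Nat.lt_succ_of_le hl))
  exact (hc _).abs.of_norm_bounded fun k => abs_mul_pow_mul_newtonCoeff_le t b k j hb

theorem det_tsum_mul_pow_eq (hc : ∀ M : ℝ, Summable fun k => c k * M ^ k) (b : ℕ → ℝ) :
    (Matrix.of fun i m : Fin N => ∑' k, c k * (a i * b m) ^ k).det
      = (newtonMatrix c a b).det * vandermondeProd (fun m : Fin N => b m) := by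
  rw [← det_newtonBasis,
    ← Matrix.det_transpose (Matrix.of fun m j : Fin N => ∏ l ∈ Finset.range j, (b m - b l)),
    ← Matrix.det_mul]
  congr 1
  ext i m
  simp only [Matrix.mul_apply, newtonMatrix, Matrix.of_apply, Matrix.transpose_apply,
    ← tsum_mul_right]
  rw [← Summable.tsum_finsetSum fun (j : Fin N) _ =>
    (summable_mul_pow_mul_newtonCoeff hc (a i) b j).mul_right _]
  refine tsum_congr fun k => ?_
  rw [mul_pow, pow_node_eq_sum_newtonCoeff b k m.isLt, ← Fin.sum_univ_eq_sum_range, Finset.mul_sum,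
    Finset.mul_sum]
  exact Finset.sum_congr rfl fun j _ => by ring

theorem tendsto_newtonMatrix (hc : ∀ M : ℝ, Summable fun k => c k * M ^ k) :
    Tendsto (newtonMatrix c a) (𝓝 0) (𝓝 (Matrix.of fun i j : Fin N => c j * a i ^ (j : ℕ))) := by
  refine tendsto_pi_nhds.2 fun i => tendsto_pi_nhds.2 fun j => ?_
  show Tendsto (fun b => ∑' k, c k * a i ^ k * newtonCoeff b k j) _ _
  have hsmall : ∀ᶠ b in 𝓝 (0 : ℕ → ℝ), ∀ l ≤ (j : ℕ), |b l| ≤ 1 :=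
    (eventually_all_finite (Set.finite_Iic _)).2 fun l _ =>
      ((continuous_apply l).abs.tendsto' 0 0 (by simp)).eventually (eventually_le_nhds one_pos)
  have hlim := tendsto_tsum_of_dominated_convergence (hc (|a i| * (1 + 1))).abs
    (fun k => ((continuous_newtonCoeff k j).tendsto 0).const_mul (c k * a i ^ k))
    (hsmall.mono fun b hb k => abs_mul_pow_mul_newtonCoeff_le _ b k j hb)
  simpa [newtonCoeff_zero, tsum_ite_eq] using hlim

end NewtonMatrix

noncomputable def besselCoeff (α : ℝ) (k : ℕ) : ℝ :=
  (4 : ℝ)⁻¹ ^ k / (k.factorial * Real.Gamma (α + k + 1))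

theorem besselI_eq_tsum (α : ℝ) {u : ℝ} (hu : 0 < u) :
    besselI α u = (u / 2) ^ α * ∑' k, besselCoeff α k * (u ^ 2) ^ k := by
  rw [besselI, ← tsum_mul_left]
  refine tsum_congr fun k => ?_
  have hpow : (u / 2) ^ (2 * (k : ℝ) + α) = (u ^ 2) ^ k * (4 : ℝ)⁻¹ ^ k * (u / 2) ^ α := by
    rw [show 2 * (k : ℝ) + α = ((2 * k : ℕ) : ℝ) + α by push_cast; ring,
      Real.rpow_add (by positivity), Real.rpow_natCast,
      pow_mul, show (u / 2) ^ 2 = u ^ 2 * (4 : ℝ)⁻¹ by ring, mul_pow]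
  rw [hpow, besselCoeff, add_comm (k : ℝ) α]
  ring

theorem besselCoeff_succ {α : ℝ} {k : ℕ} (hk : α + k + 1 ≠ 0) :
    besselCoeff α (k + 1) = besselCoeff α k / (4 * (k + 1) * (α + k + 1)) := by
  have hΓ : Real.Gamma (α + ↑(k + 1) + 1) = (α + k + 1) * Real.Gamma (α + k + 1) := by
    rw [← Real.Gamma_add_one hk]
    push_cast
    ring_nf
  rw [besselCoeff, besselCoeff, hΓ, Nat.factorial_succ]
  push_cast
  field_simp
  ring

theorem summable_besselCoeff_mul_pow (α M : ℝ) : Summable fun k => besselCoeff α k * M ^ k := by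
  refine summable_of_ratio_norm_eventually_le (r := 1 / 2) (by norm_num) ?_
  filter_upwards [tendsto_natCast_atTop_atTop.eventually_ge_atTop (2 * |M| - α)] with k hk
  set D : ℝ := 4 * (k + 1) * (α + k + 1)
  have hαk : 2 * |M| + 1 ≤ α + k + 1 := by linarith
  have hDpos : 0 < D := mul_pos (by positivity) (by linarith [abs_nonneg M])
  have hMD : |M| / D ≤ 1 / 2 := by
    rw [div_le_iff₀ hDpos]
    nlinarith [abs_nonneg M]
  rw [besselCoeff_succ (by linarith [abs_nonneg M])]
  calc ‖besselCoeff α k / D * M ^ (k + 1)‖ = ‖besselCoeff α k * M ^ k‖ * (|M| / D) := by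
        rw [norm_mul, norm_mul, norm_div, norm_pow, norm_pow, pow_succ,
          Real.norm_of_nonneg hDpos.le, Real.norm_eq_abs M]
        ring
    _ ≤ 1 / 2 * ‖besselCoeff α k * M ^ k‖ := by
        rw [mul_comm]
        gcongr

theorem prod_besselCoeff_div (α : ℝ) (N : ℕ) :
    (∏ j : Fin N, besselCoeff α j) / ((2 : ℝ) ^ α) ^ N
      = (2 : ℝ) ^ (-(α * N) - N * (N - 1))
        / ∏ j : Fin N, ((j : ℕ).factorial * Real.Gamma (α + (j : ℕ) + 1)) := by
  have hgauss : (N : ℝ) * (N - 1) = ((2 * ∑ j : Fin N, (j : ℕ) : ℕ) : ℝ) := by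
    rw [Fin.sum_univ_eq_sum_range (fun j => j) N, mul_comm 2, Finset.sum_range_id_mul_two]
    rcases N.eq_zero_or_pos with rfl | hN
    · simp
    · push_cast [Nat.cast_sub hN]
      ring
  simp only [besselCoeff]
  rw [Finset.prod_div_distrib, Finset.prod_pow_eq_pow_sum, Real.rpow_sub two_pos, Real.rpow_neg
    zero_le_two, Real.rpow_mul_natCast zero_le_two, hgauss, Real.rpow_natCast, pow_mul, inv_pow]
  norm_num
  ring

section BesselDet

variable {N : ℕ}

def sqSeq (y : Fin N → ℝ) (l : ℕ) : ℝ :=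
  if h : l < N then y ⟨l, h⟩ ^ 2 else 0

theorem sqSeq_val (y : Fin N → ℝ) (m : Fin N) : sqSeq y m = y m ^ 2 := by
  simp [sqSeq]

theorem sqSeq_zero : sqSeq (0 : Fin N → ℝ) = 0 := by
  ext l
  simp [sqSeq]

theorem continuous_sqSeq : Continuous (sqSeq (N := N)) :=
  continuous_pi fun l => by
    unfold sqSeq
    split_ifs
    exacts [(continuous_apply _).pow 2, continuous_const]

theorem det_besselI_eq (α : ℝ) {x y : Fin N → ℝ} (hx : ∀ i, 0 < x i) (hy : ∀ j, 0 < y j) :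
    (Matrix.of fun i j => besselI α (x i * y j)).det
      = (∏ i, (x i / 2) ^ α) * (∏ j, y j ^ α)
        * (newtonMatrix (besselCoeff α) (fun i => x i ^ 2) (sqSeq y)).det
        * vandermondeProd (fun k => y k ^ 2) := by
  have hmat : (Matrix.of fun i j => besselI α (x i * y j))
      = Matrix.diagonal (fun i => (x i / 2) ^ α)
        * Matrix.of (fun i m : Fin N => ∑' k, besselCoeff α k * (x i ^ 2 * sqSeq y m) ^ k)
        * Matrix.diagonal (fun j => y j ^ α) := by
    ext i j
    rw [Matrix.mul_diagonal, Matrix.diagonal_mul, Matrix.of_apply, Matrix.of_apply,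
      besselI_eq_tsum α (mul_pos (hx i) (hy j)), mul_div_right_comm,
      Real.mul_rpow (div_pos (hx i) two_pos).le (hy j).le, sqSeq_val, mul_pow]
    ring
  rw [hmat, Matrix.det_mul, Matrix.det_mul, Matrix.det_diagonal, Matrix.det_diagonal,
    det_tsum_mul_pow_eq _ (summable_besselCoeff_mul_pow α)]
  simp only [sqSeq_val]
  ring

theorem det_besselI_div_eq (α : ℝ) {x y : Fin N → ℝ} (hx : ∀ i, 0 < x i) (hy : ∀ j, 0 < y j)
    (hΔ : vandermondeProd (fun k => y k ^ 2) ≠ 0) :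
    (Matrix.of fun i j => besselI α (x i * y j)).det
        / ((∏ k, (x k * y k) ^ α) * vandermondeProd (fun k => y k ^ 2))
      = (newtonMatrix (besselCoeff α) (fun i => x i ^ 2) (sqSeq y)).det / ((2 : ℝ) ^ α) ^ N := by
  have hxy : ∏ k, (x k * y k) ^ α = (∏ k, x k ^ α) * ∏ k, y k ^ α := by
    rw [← Finset.prod_mul_distrib]
    exact Finset.prod_congr rfl fun k _ => Real.mul_rpow (hx k).le (hy k).le
  have hx2 : ∏ i, (x i / 2) ^ α = (∏ i, x i ^ α) / ((2 : ℝ) ^ α) ^ N := by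
    rw [← Fin.prod_const, ← Finset.prod_div_distrib]
    exact Finset.prod_congr rfl fun i _ => Real.div_rpow (hx i).le zero_le_two α
  have hxα : ∏ k, x k ^ α ≠ 0 :=
    Finset.prod_ne_zero_iff.2 fun k _ => (Real.rpow_pos_of_pos (hx k) α).ne'
  have hyα : ∏ k, y k ^ α ≠ 0 :=
    Finset.prod_ne_zero_iff.2 fun k _ => (Real.rpow_pos_of_pos (hy k) α).ne'
  rw [det_besselI_eq α hx hy, hxy, hx2]
  field_simp

end BesselDet

theorem stmt_4_general (α : ℝ) (N : ℕ)
    (x : Fin N → ℝ) (hxpos : ∀ i, 0 < x i) :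
    Filter.Tendsto
      (fun y : Fin N → ℝ =>
        (Matrix.of fun i j : Fin N => besselI α (x i * y j)).det /
          ((∏ k : Fin N, (x k * y k) ^ α) * vandermondeProd (fun k : Fin N => (y k) ^ 2)))
      (nhdsWithin 0 {y : Fin N → ℝ | Function.Injective y ∧ ∀ i, 0 < y i})
      (nhds (vandermondeProd (fun k : Fin N => (x k) ^ 2) *
        (2 : ℝ) ^ (-(α * (N : ℝ)) - (N : ℝ) * ((N : ℝ) - 1)) /
          ∏ j : Fin N, ((Nat.factorial (j : ℕ) : ℝ) * Real.Gamma (α + (j : ℕ) + 1)))) := by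
  set S := {y : Fin N → ℝ | Function.Injective y ∧ ∀ i, 0 < y i}
  have hsq : Tendsto sqSeq (𝓝[S] 0) (𝓝 0) :=
    (continuous_sqSeq.tendsto' 0 0 sqSeq_zero).mono_left nhdsWithin_le_nhds
  have hdet := ((continuous_id.matrix_det.tendsto _).comp
    ((tendsto_newtonMatrix (fun i => x i ^ 2) (summable_besselCoeff_mul_pow α)).comp hsq)).div_const
      (((2 : ℝ) ^ α) ^ N)
  simp only [Function.comp_def, id] at hdet
  rw [det_of_mul_pow, mul_comm, mul_div_assoc, prod_besselCoeff_div, ← mul_div_assoc] at hdet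
  refine hdet.congr' ?_
  filter_upwards [self_mem_nhdsWithin] with y ⟨hyinj, hypos⟩
  refine (det_besselI_div_eq α hxpos hypos (vandermondeProd_ne_zero fun i j h => hyinj ?_)).symm
  exact (pow_left_inj₀ (hypos i).le (hypos j).le two_ne_zero).1 h

theorem stmt_4 (α : ℝ) (hα : -1 < α) (N : ℕ) (hN : 1 ≤ N)
    (x : Fin N → ℝ) (hxinj : Function.Injective x) (hxpos : ∀ i, 0 < x i) :
    Filter.Tendsto
      (fun y : Fin N → ℝ =>
        (Matrix.of fun i j : Fin N => besselI α (x i * y j)).det /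
          ((∏ k : Fin N, (x k * y k) ^ α) * vandermondeProd (fun k : Fin N => (y k) ^ 2)))
      (nhdsWithin 0 {y : Fin N → ℝ | Function.Injective y ∧ ∀ i, 0 < y i})
      (nhds (vandermondeProd (fun k : Fin N => (x k) ^ 2) *
        (2 : ℝ) ^ (-(α * (N : ℝ)) - (N : ℝ) * ((N : ℝ) - 1)) /
          ∏ j : Fin N, ((Nat.factorial (j : ℕ) : ℝ) * Real.Gamma (α + (j : ℕ) + 1)))) :=
  stmt_4_general α N x hxpos
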